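/- Let G be a groupoid and A a G-graded k-algebra. The following are equivalent: (1) A is strongly graded (A_σ A_τ = A_{στ} whenever t(τ) = s(σ)); (2) the adjoint pair (−⊗_T A, (−)^{co kG}) between right T-modules and G-graded right A-modules is an equivalence of categories; (3) the canonical map can: A ⊗_T A → ⊕_{σ∈G₁} A·(1_{t(σ)})⊗u_σ, can(a⊗b) = ∑_{σ∈G₁} a b_σ ⊗ u_σ, is bijective; (4) can is surjective. Here T = ⊕_{x∈G₀} A_x. -/

import Mathlib

/-!
Strong grading is equivalent to each local unit `1_{t σ}` lying in `A_σ A_{σ⁻¹}`. Given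
`1_{s σ} = ∑_j u_{σ j} v_{σ j}` with `u_{σ j} ∈ A_{σ⁻¹}`, `v_{σ j} ∈ A_σ`, every `a ∈ A` splits as
`a = ∑_{σ,j} (a_σ u_{σ j}) v_{σ j}` with `a_σ u_{σ j} ∈ T`. Hence `f ↦ ∑ f(σ) u_{σ j} ⊗ v_{σ j}`
inverts `can` and `m ↦ ∑ m_σ u_{σ j} ⊗ v_{σ j}` inverts the counit modulo the `T`-balancing
relations. The unit `n ↦ n ⊗ 1` is always a bijection onto the coinvariants, with retraction
`n ⊗ a ↦ n · a_T`.

Conversely, take a preimage of `1_{t σ}` under `can` (placed in degree `σ⁻¹`), or under the counit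
of the shifted module `A(σ) = 1_{t σ} A`, whose coinvariants are `A_σ`. Its component of degree
`e (t σ)` lies in `A_σ A_{σ⁻¹}`.
-/

/-- A finite groupoid, given by sets of objects and morphisms with source,
target, identities, partial composition and inverses. -/
structure FinGroupoid where
  O : Type
  M : Type
  [fO : Fintype O]
  [fM : Fintype M]
  [dO : DecidableEq O]
  [dM : DecidableEq M]
  s : M → O
  t : M → O
  e : O → M
  comp : M → M → M
  inv : M → M
  s_e : ∀ x, s (e x) = x
  t_e : ∀ x, t (e x) = x
  s_comp : ∀ σ τ, t τ = s σ → s (comp σ τ) = s τ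
  t_comp : ∀ σ τ, t τ = s σ → t (comp σ τ) = t σ
  comp_assoc : ∀ σ τ ρ, t τ = s σ → t ρ = s τ →
    comp (comp σ τ) ρ = comp σ (comp τ ρ)
  e_comp : ∀ σ, comp (e (t σ)) σ = σ
  comp_e : ∀ σ, comp σ (e (s σ)) = σ
  s_inv : ∀ σ, s (inv σ) = t σ
  t_inv : ∀ σ, t (inv σ) = s σ
  inv_comp : ∀ σ, comp (inv σ) σ = e (s σ)
  comp_inv : ∀ σ, comp σ (inv σ) = e (t σ)

attribute [instance] FinGroupoid.fO FinGroupoid.fM FinGroupoid.dO FinGroupoid.dM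

/-- The multiplication of the groupoid algebra `kG`, on the free module
`G.M → k`:  `u_σ * u_τ = u_{στ}` if `t τ = s σ` and `0` otherwise. -/
noncomputable def gmul (k : Type) [CommRing k] (G : FinGroupoid) (f g : G.M → k) :
    G.M → k := fun m =>
  ∑ p : G.M × G.M,
    if G.t p.2 = G.s p.1 ∧ G.comp p.1 p.2 = m then f p.1 * g p.2 else 0

/-- The unit `∑_{x ∈ G₀} u_{id_x}` of the groupoid algebra. -/
noncomputable def gone (k : Type) [CommRing k] (G : FinGroupoid) : G.M → k :=
  fun m => ∑ x : G.O, if G.e x = m then 1 else 0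

/-- A `G`-graded `k`-algebra, encoded by the projections
`π σ : A → A_σ` onto the homogeneous components. -/
structure GradedAlg (k : Type) [CommRing k] (G : FinGroupoid) (A : Type)
    [Ring A] [Algebra k A] where
  π : G.M → (A →ₗ[k] A)
  sum_pi : ∀ a : A, ∑ σ : G.M, π σ a = a
  pi_pi : ∀ (σ τ : G.M) (a : A), π σ (π τ a) = if σ = τ then π τ a else 0
  mul_comp : ∀ (σ τ : G.M) (a b : A), G.t τ = G.s σ →
    π σ a * π τ b = π (G.comp σ τ) (π σ a * π τ b)
  mul_ncomp : ∀ (σ τ : G.M) (a b : A), G.t τ ≠ G.s σ → π σ a * π τ b = 0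
  one_supp : ∀ σ : G.M, (∀ x : G.O, σ ≠ G.e x) → π σ 1 = 0


open TensorProduct

variable (k : Type) [CommRing k] (G : FinGroupoid) (A : Type) [Ring A] [Algebra k A]

/-- The subring `T = ⊕_{x∈G₀} A_x` of degree-identity components. -/
def Tset (gr : GradedAlg k G A) : Set A :=
  {a : A | ∀ σ : G.M, (∀ x : G.O, σ ≠ G.e x) → gr.π σ a = 0}

/-- The homogeneous component `A_σ`. -/
def Asub (gr : GradedAlg k G A) (σ : G.M) : Submodule k A where
  carrier := {a : A | gr.π σ a = a}
  add_mem' := by intro a b ha hb; simp only [Set.mem_setOf_eq] at *; rw [map_add, ha, hb]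
  zero_mem' := by simp
  smul_mem' := by intro c a ha; simp only [Set.mem_setOf_eq] at *; rw [map_smul, ha]

/-- `A` is strongly graded: `A_σ A_τ = A_{στ}` whenever `t(τ) = s(σ)`. -/
def StronglyGraded (gr : GradedAlg k G A) : Prop :=
  ∀ σ τ : G.M, G.t τ = G.s σ →
    Submodule.span k {p : A | ∃ a ∈ Asub k G A gr σ, ∃ b ∈ Asub k G A gr τ,
      p = a * b} = Asub k G A gr (G.comp σ τ)

/-- A `G`-graded right `A`-module. -/
structure GradedMod (gr : GradedAlg k G A) where
  Mc : Type
  [acg : AddCommGroup Mc]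
  [mod : Module k Mc]
  act : A →ₗ[k] Module.End k Mc
  act_one : act 1 = LinearMap.id
  act_mul : ∀ a b : A, act (a * b) = act b ∘ₗ act a
  πM : G.M → (Mc →ₗ[k] Mc)
  sum_pi : ∀ m, ∑ σ : G.M, πM σ m = m
  pi_pi : ∀ (σ τ : G.M) (m : Mc), πM σ (πM τ m) = if σ = τ then πM τ m else 0
  mul_comp : ∀ (σ τ : G.M) (m : Mc) (a : A), G.t τ = G.s σ →
    act (gr.π τ a) (πM σ m) = πM (G.comp σ τ) (act (gr.π τ a) (πM σ m))
  mul_ncomp : ∀ (σ τ : G.M) (m : Mc) (a : A), G.t τ ≠ G.s σ →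
    act (gr.π τ a) (πM σ m) = 0

attribute [instance] GradedMod.acg GradedMod.mod

/-- The coinvariants `M^{co kG} = ⊕_{x∈G₀} M_x` of a graded module. -/
def Mco (gr : GradedAlg k G A) (X : GradedMod k G A gr) : Submodule k X.Mc where
  carrier := {m : X.Mc | ∀ σ : G.M, (∀ x : G.O, σ ≠ G.e x) → X.πM σ m = 0}
  add_mem' := by intro a b ha hb σ hσ; rw [map_add, ha σ hσ, hb σ hσ, add_zero]
  zero_mem' := by intro σ _; simp
  smul_mem' := by intro c a ha σ hσ; rw [map_smul, ha σ hσ, smul_zero]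

/-- The counit `ζ_M : M^{co kG} ⊗_T A → M`, at the level of `M^{co kG} ⊗ₖ A`. -/
noncomputable def zmap (gr : GradedAlg k G A) (X : GradedMod k G A gr) :
    (Mco k G A gr X) ⊗[k] A →ₗ[k] X.Mc :=
  TensorProduct.lift (LinearMap.mk₂ k
    (fun (m : Mco k G A gr X) (a : A) => X.act a (m : X.Mc))
    (by intro a b c; simp)
    (by intro t a c; simp)
    (by intro a b c; simp [map_add, LinearMap.add_apply])
    (by intro t a c; simp [map_smul, LinearMap.smul_apply]))

/-- The `T`-balancing relations in `M^{co kG} ⊗ₖ A`. -/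
noncomputable def balMod (gr : GradedAlg k G A) (X : GradedMod k G A gr) :
    Submodule k ((Mco k G A gr X) ⊗[k] A) :=
  Submodule.span k {z | ∃ (m m' : Mco k G A gr X) (t a : A),
    t ∈ Tset k G A gr ∧ (m' : X.Mc) = X.act t (m : X.Mc) ∧
    z = m' ⊗ₜ[k] a - m ⊗ₜ[k] (t * a)}

/-- The `T`-balancing relations in `N ⊗ₖ A` for a right `T`-module `N`. -/
noncomputable def balT (gr : GradedAlg k G A) (N : Type) [AddCommGroup N]
    [Module k N] (ract : A → N →ₗ[k] N) : Submodule k (N ⊗[k] A) :=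
  Submodule.span k {z | ∃ (n : N) (a t : A), t ∈ Tset k G A gr ∧
    z = (ract t n) ⊗ₜ[k] a - n ⊗ₜ[k] (t * a)}

/-- The unit map `ν_N : N → N ⊗_T A`, `ν_N(n) = ∑_{x∈G₀} n·1_x ⊗ 1_x`. -/
noncomputable def nuMap (gr : GradedAlg k G A) (N : Type) [AddCommGroup N]
    [Module k N] (ract : A → N →ₗ[k] N) :
    N → (N ⊗[k] A) ⧸ balT k G A gr N ract := fun n =>
  ∑ x : G.O, Submodule.Quotient.mk
    ((ract (gr.π (G.e x) 1) n) ⊗ₜ[k] gr.π (G.e x) 1)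

/-- The coinvariants of `N ⊗_T A`: the image of `N ⊗ₖ T`. -/
noncomputable def CoSub (gr : GradedAlg k G A) (N : Type) [AddCommGroup N]
    [Module k N] (ract : A → N →ₗ[k] N) :
    Submodule k ((N ⊗[k] A) ⧸ balT k G A gr N ract) :=
  Submodule.span k {y | ∃ (n : N) (a : A), a ∈ Tset k G A gr ∧
    y = Submodule.Quotient.mk (n ⊗ₜ[k] a)}

/-- The pair `(−⊗_T A, (−)^{co kG})` is an equivalence: both the counit `ζ`
(for every graded module) and the unit `ν` (for every `T`-module) are
bijective. -/
def IsEquivalencePair (gr : GradedAlg k G A) : Prop :=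
  (∀ X : GradedMod k G A gr,
    (∀ z ∈ balMod k G A gr X, zmap k G A gr X z = 0) ∧
    (∀ z, zmap k G A gr X z = 0 → z ∈ balMod k G A gr X) ∧
    Function.Surjective (zmap k G A gr X)) ∧
  (∀ (N : Type) (_ : AddCommGroup N) (_ : Module k N)
    (ract : A → N →ₗ[k] N),
    (∀ t t' : A, t ∈ Tset k G A gr → t' ∈ Tset k G A gr →
      ∀ n : N, ract (t * t') n = ract t' (ract t n)) →
    (∀ n : N, ract 1 n = n) →
    (∀ t t' : A, t ∈ Tset k G A gr → t' ∈ Tset k G A gr →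
      ract (t + t') = ract t + ract t') →
    (∀ (c : k) (t : A), t ∈ Tset k G A gr → ract (c • t) = c • ract t) →
    ((∀ n : N, nuMap k G A gr N ract n ∈ CoSub k G A gr N ract) ∧
     Function.Injective (nuMap k G A gr N ract) ∧
     (∀ y ∈ CoSub k G A gr N ract, ∃ n, nuMap k G A gr N ract n = y)))

/-- The canonical map `can : A ⊗ A → A ⊗ kG ⊇ C`,
`can(a⊗b) = ∑_σ a b_σ ⊗ u_σ`, encoded with values in `G.M → A`. -/
noncomputable def canMap (gr : GradedAlg k G A) : A ⊗[k] A →ₗ[k] (G.M → A) :=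
  TensorProduct.lift (LinearMap.mk₂ k
    (fun a b : A => fun σ : G.M => a * gr.π σ b)
    (by intro a b c; funext σ; simp [add_mul])
    (by intro t a c; funext σ; simp [smul_mul_assoc])
    (by intro a b c; funext σ; simp [map_add, mul_add])
    (by intro t a c; funext σ; simp [map_smul, mul_smul_comm]))

/-- Membership in the coring `C = ⊕_σ A 1_{s(σ)} ⊗ u_σ ⊆ A ⊗ kG`. -/
def inC (gr : GradedAlg k G A) (f : G.M → A) : Prop :=
  ∀ σ : G.M, f σ * gr.π (G.e (G.s σ)) 1 = f σ

/-- `can : A ⊗_T A → C` is bijective. -/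
def CanBijective (gr : GradedAlg k G A) : Prop :=
  (∀ z ∈ Submodule.span k {z : A ⊗[k] A | ∃ (a b t : A),
      t ∈ Tset k G A gr ∧ z = (a * t) ⊗ₜ[k] b - a ⊗ₜ[k] (t * b)},
    canMap k G A gr z = 0) ∧
  (∀ z : A ⊗[k] A, canMap k G A gr z = 0 →
    z ∈ Submodule.span k {z : A ⊗[k] A | ∃ (a b t : A),
      t ∈ Tset k G A gr ∧ z = (a * t) ⊗ₜ[k] b - a ⊗ₜ[k] (t * b)}) ∧
  (∀ z : A ⊗[k] A, inC k G A gr (canMap k G A gr z)) ∧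
  (∀ f : G.M → A, inC k G A gr f → ∃ z, canMap k G A gr z = f)

/-- `can : A ⊗_T A → C` is surjective. -/
def CanSurjective (gr : GradedAlg k G A) : Prop :=
  ∀ f : G.M → A, inC k G A gr f → ∃ z, canMap k G A gr z = f

namespace FinGroupoid

variable (G : FinGroupoid)

theorem e_injective : Function.Injective G.e := fun x y h => by
  rw [← G.s_e x, h, G.s_e]

theorem inv_comp_cancel_left {ρ σ : G.M} (h : G.t σ = G.s ρ) :
    G.comp (G.inv ρ) (G.comp ρ σ) = σ := by
  rw [← G.comp_assoc _ _ _ (G.s_inv ρ).symm h, G.inv_comp, ← h, G.e_comp]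

theorem comp_inv_cancel_left {ρ τ : G.M} (h : G.t τ = G.t ρ) :
    G.comp ρ (G.comp (G.inv ρ) τ) = τ := by
  rw [← G.comp_assoc _ _ _ (G.t_inv ρ) (by rw [h, G.s_inv]), G.comp_inv, ← h, G.e_comp]

theorem comp_inv_cancel_right {ρ σ : G.M} (h : G.s ρ = G.s σ) :
    G.comp (G.comp ρ (G.inv σ)) σ = ρ := by
  rw [G.comp_assoc _ _ _ (by rw [G.t_inv, h]) (G.s_inv σ).symm, G.inv_comp, ← h, G.comp_e]

theorem comp_left_cancel {ρ σ τ : G.M} (hσ : G.t σ = G.s ρ) (hτ : G.t τ = G.s ρ)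
    (h : G.comp ρ σ = G.comp ρ τ) : σ = τ := by
  rw [← G.inv_comp_cancel_left hσ, h, G.inv_comp_cancel_left hτ]

theorem eq_of_comp_inv_eq_e {ρ σ : G.M} (hs : G.s ρ = G.s σ)
    (h : G.comp ρ (G.inv σ) = G.e (G.t σ)) : ρ = σ := by
  rw [← G.comp_inv_cancel_right hs, h, G.e_comp]

theorem inv_inv (σ : G.M) : G.inv (G.inv σ) = σ :=
  G.comp_left_cancel (by rw [G.t_inv, G.s_inv]) (G.s_inv σ).symm
    (by rw [G.comp_inv, G.inv_comp, G.t_inv])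

theorem sum_e_eq_sum {V : Type*} [AddCommMonoid V] (f : G.M → V)
    (hf : ∀ σ, (∀ x, σ ≠ G.e x) → f σ = 0) : ∑ x, f (G.e x) = ∑ σ, f σ := by
  rw [← Finset.sum_image fun x _ y _ h => G.e_injective h]
  refine Finset.sum_subset (Finset.subset_univ _) fun σ _ hσ => hf σ fun x hx => hσ ?_
  exact Finset.mem_image.2 ⟨x, Finset.mem_univ x, hx.symm⟩

theorem sum_ite_t_eq_s_comp {V : Type*} [AddCommMonoid V]
    (ρ : G.M) (f : G.M → V) :
    ∑ σ, (if G.t σ = G.s ρ then f (G.comp ρ σ) else 0) =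
      ∑ τ, (if G.t τ = G.t ρ then f τ else 0) := by
  rw [← Finset.sum_filter, ← Finset.sum_filter]
  refine Finset.sum_nbij' (G.comp ρ ·) (G.comp (G.inv ρ) ·) (fun σ hσ => ?_) (fun τ hτ => ?_)
    (fun σ hσ => ?_) (fun τ hτ => ?_) fun _ _ => rfl
  · simp only [Finset.mem_filter, Finset.mem_univ, true_and] at hσ ⊢
    exact G.t_comp ρ σ hσ
  · simp only [Finset.mem_filter, Finset.mem_univ, true_and] at hτ ⊢
    rw [G.t_comp _ _ (by rw [hτ, G.s_inv]), G.t_inv]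
  · simp only [Finset.mem_filter, Finset.mem_univ, true_and] at hσ
    exact G.inv_comp_cancel_left hσ
  · simp only [Finset.mem_filter, Finset.mem_univ, true_and] at hτ
    exact G.comp_inv_cancel_left hτ

end FinGroupoid

theorem Submodule.span_setOf_mul_eq_mul {R B : Type*} [CommSemiring R] [Semiring B] [Algebra R B]
    (M N : Submodule R B) :
    Submodule.span R {p : B | ∃ a ∈ M, ∃ b ∈ N, p = a * b} = M * N := by
  rw [Submodule.mul_eq_span_mul_set]
  congr 1
  ext p
  simp only [Set.mem_setOf_eq, Set.mem_mul, SetLike.mem_coe, eq_comm]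

theorem Submodule.exists_fin_sum_mul_eq_of_mem_mul {R B : Type*} [CommSemiring R] [Semiring B]
    [Algebra R B] {M N : Submodule R B} {x : B} (hx : x ∈ M * N) :
    ∃ (n : ℕ) (a b : Fin n → B), (∀ i, a i ∈ M) ∧ (∀ i, b i ∈ N) ∧ ∑ i, a i * b i = x := by
  refine Submodule.mul_induction_on hx (fun m hm n hn => ?_) fun x y hx hy => ?_
  · exact ⟨1, fun _ => m, fun _ => n, fun _ => hm, fun _ => hn, by simp⟩
  · obtain ⟨n, a, b, ha, hb, rfl⟩ := hx
    obtain ⟨n', a', b', ha', hb', rfl⟩ := hy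
    refine ⟨n + n', Fin.append a a', Fin.append b b', Fin.addCases ?_ ?_, Fin.addCases ?_ ?_,
      by simp [Fin.sum_univ_add]⟩ <;> simp [ha, hb, ha', hb']

namespace GradedAlg

variable {k G A} (gr : GradedAlg k G A)

theorem mem_Asub_iff {σ : G.M} {a : A} : a ∈ Asub k G A gr σ ↔ gr.π σ a = a := Iff.rfl

theorem pi_mem_Asub (σ : G.M) (a : A) : gr.π σ a ∈ Asub k G A gr σ := by
  rw [mem_Asub_iff, gr.pi_pi, if_pos rfl]

theorem pi_of_mem_Asub {σ : G.M} {a : A} (ha : a ∈ Asub k G A gr σ) (τ : G.M) :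
    gr.π τ a = if τ = σ then a else 0 := by
  rw [← ha, gr.pi_pi, ha]

theorem mul_mem_Asub_comp {σ τ : G.M} {a b : A} (ha : a ∈ Asub k G A gr σ)
    (hb : b ∈ Asub k G A gr τ) (h : G.t τ = G.s σ) : a * b ∈ Asub k G A gr (G.comp σ τ) := by
  have := gr.mul_comp σ τ a b h
  rw [ha, hb] at this
  exact this.symm

theorem mul_eq_zero_of_mem_Asub {σ τ : G.M} {a b : A} (ha : a ∈ Asub k G A gr σ)
    (hb : b ∈ Asub k G A gr τ) (h : G.t τ ≠ G.s σ) : a * b = 0 := by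
  rw [← ha, ← hb]
  exact gr.mul_ncomp σ τ a b h

theorem Asub_mul_le {σ τ : G.M} (h : G.t τ = G.s σ) :
    Asub k G A gr σ * Asub k G A gr τ ≤ Asub k G A gr (G.comp σ τ) :=
  Submodule.mul_le.2 fun _ ha _ hb => gr.mul_mem_Asub_comp ha hb h

theorem mem_Tset_of_mem_Asub_e {x : G.O} {a : A} (ha : a ∈ Asub k G A gr (G.e x)) :
    a ∈ Tset k G A gr := fun σ hσ => by
  rw [gr.pi_of_mem_Asub ha, if_neg (hσ x)]

theorem pi_e_mem_Tset (x : G.O) (a : A) : gr.π (G.e x) a ∈ Tset k G A gr :=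
  gr.mem_Tset_of_mem_Asub_e (gr.pi_mem_Asub _ a)

theorem sum_pi_e_of_mem_Tset {a : A} (ha : a ∈ Tset k G A gr) :
    ∑ x, gr.π (G.e x) a = a := by
  rw [G.sum_e_eq_sum (fun σ => gr.π σ a) ha, gr.sum_pi]

theorem sum_pi_e_one : ∑ x, gr.π (G.e x) (1 : A) = 1 :=
  gr.sum_pi_e_of_mem_Tset gr.one_supp

theorem mul_pi_e_one_of_mem {σ : G.M} {a : A} (ha : a ∈ Asub k G A gr σ) :
    a * gr.π (G.e (G.s σ)) 1 = a := by
  calc a * gr.π (G.e (G.s σ)) 1 = ∑ x, a * gr.π (G.e x) 1 := by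
        rw [Finset.sum_eq_single (G.s σ) (fun x _ hx => ?_) (fun h => absurd (Finset.mem_univ _) h)]
        exact gr.mul_eq_zero_of_mem_Asub ha (gr.pi_mem_Asub _ 1) (by rwa [G.t_e])
    _ = a := by rw [← Finset.mul_sum, gr.sum_pi_e_one, mul_one]

theorem pi_e_one_mul_of_mem {σ : G.M} {a : A} (ha : a ∈ Asub k G A gr σ) :
    gr.π (G.e (G.t σ)) 1 * a = a := by
  calc gr.π (G.e (G.t σ)) 1 * a = ∑ x, gr.π (G.e x) 1 * a := by
        rw [Finset.sum_eq_single (G.t σ) (fun x _ hx => ?_) (fun h => absurd (Finset.mem_univ _) h)]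
        exact gr.mul_eq_zero_of_mem_Asub (gr.pi_mem_Asub _ 1) ha (by rw [G.s_e]; exact Ne.symm hx)
    _ = a := by rw [← Finset.sum_mul, gr.sum_pi_e_one, one_mul]

theorem pi_e_one_mul_pi_e_one (x : G.O) :
    gr.π (G.e x) 1 * gr.π (G.e x) 1 = gr.π (G.e x) (1 : A) := by
  simpa only [G.s_e] using gr.mul_pi_e_one_of_mem (gr.pi_mem_Asub (G.e x) 1)

theorem mul_mem_Asub_of_mem_e {x : G.O} {μ : G.M} {c b : A} (hc : c ∈ Asub k G A gr (G.e x))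
    (hb : b ∈ Asub k G A gr μ) : c * b ∈ Asub k G A gr μ := by
  by_cases h : G.t μ = x
  · subst h
    simpa only [G.e_comp] using gr.mul_mem_Asub_comp hc hb (G.s_e _).symm
  · rw [gr.mul_eq_zero_of_mem_Asub hc hb (by rwa [G.s_e])]
    exact zero_mem _

theorem mul_mem_Asub_of_mem_Tset {t b : A} {μ : G.M} (ht : t ∈ Tset k G A gr)
    (hb : b ∈ Asub k G A gr μ) : t * b ∈ Asub k G A gr μ := by
  rw [← gr.sum_pi_e_of_mem_Tset ht, Finset.sum_mul]
  exact Submodule.sum_mem _ fun x _ => gr.mul_mem_Asub_of_mem_e (gr.pi_mem_Asub _ t) hb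

theorem pi_mul_of_mem_Tset {t : A} (ht : t ∈ Tset k G A gr) (τ : G.M) (a : A) :
    gr.π τ (t * a) = t * gr.π τ a := by
  have key : ∀ μ, gr.π τ (t * gr.π μ a) = if τ = μ then t * gr.π μ a else 0 :=
    fun μ => gr.pi_of_mem_Asub (gr.mul_mem_Asub_of_mem_Tset ht (gr.pi_mem_Asub μ a)) τ
  conv_lhs => rw [← gr.sum_pi a, Finset.mul_sum, map_sum]
  simp only [key, Finset.sum_ite_eq, Finset.mem_univ, if_true]

theorem mul_mem_Tset_of_mem_inv {σ : G.M} {a b : A} (ha : a ∈ Asub k G A gr σ)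
    (hb : b ∈ Asub k G A gr (G.inv σ)) : a * b ∈ Tset k G A gr :=
  gr.mem_Tset_of_mem_Asub_e (x := G.t σ) (by
    simpa only [G.comp_inv] using gr.mul_mem_Asub_comp ha hb (G.t_inv σ))

theorem pi_e_t_mul_of_mem {ρ : G.M} {a : A} (ha : a ∈ Asub k G A gr ρ) (b : A) :
    gr.π (G.e (G.t ρ)) (a * b) = a * gr.π (G.inv ρ) b := by
  have key : ∀ τ, gr.π (G.e (G.t ρ)) (a * gr.π τ b) =
      if τ = G.inv ρ then a * gr.π τ b else 0 := by
    intro τ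
    by_cases hc : G.t τ = G.s ρ
    · rw [gr.pi_of_mem_Asub (gr.mul_mem_Asub_comp ha (gr.pi_mem_Asub τ b) hc)]
      refine if_congr ⟨fun h => G.comp_left_cancel hc (G.t_inv ρ) ?_, fun h => ?_⟩ rfl rfl
      · rw [← h, G.comp_inv]
      · rw [h, G.comp_inv]
    · rw [gr.mul_eq_zero_of_mem_Asub ha (gr.pi_mem_Asub τ b) hc, map_zero, ite_self]
  conv_lhs => rw [← gr.sum_pi b, Finset.mul_sum, map_sum]
  simp only [key, Finset.sum_ite_eq', Finset.mem_univ, if_true]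

theorem pi_e_t_mul_of_mem_inv {σ : G.M} {b : A} (hb : b ∈ Asub k G A gr (G.inv σ)) (a : A) :
    gr.π (G.e (G.t σ)) (a * b) = gr.π σ a * b := by
  have key : ∀ ρ, gr.π (G.e (G.t σ)) (gr.π ρ a * b) =
      if ρ = σ then gr.π ρ a * b else 0 := by
    intro ρ
    by_cases hc : G.t (G.inv σ) = G.s ρ
    · rw [gr.pi_of_mem_Asub (gr.mul_mem_Asub_comp (gr.pi_mem_Asub ρ a) hb hc)]
      have hs : G.s ρ = G.s σ := hc.symm.trans (G.t_inv σ)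
      refine if_congr ⟨fun h => G.eq_of_comp_inv_eq_e hs h.symm, fun h => ?_⟩ rfl rfl
      rw [h, G.comp_inv]
    · rw [gr.mul_eq_zero_of_mem_Asub (gr.pi_mem_Asub ρ a) hb hc, map_zero, ite_self]
  conv_lhs => rw [← gr.sum_pi a, Finset.sum_mul, map_sum]
  simp only [key, Finset.sum_ite_eq', Finset.mem_univ, if_true]

theorem stronglyGraded_iff : StronglyGraded k G A gr ↔ ∀ σ τ : G.M, G.t τ = G.s σ →
    Asub k G A gr σ * Asub k G A gr τ = Asub k G A gr (G.comp σ τ) := by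
  simp only [StronglyGraded, Submodule.span_setOf_mul_eq_mul]

def HasPartialUnits : Prop :=
  ∀ σ : G.M, gr.π (G.e (G.t σ)) 1 ∈ Asub k G A gr σ * Asub k G A gr (G.inv σ)

variable {gr}

theorem _root_.StronglyGraded.hasPartialUnits (h : StronglyGraded k G A gr) : gr.HasPartialUnits :=
  fun σ => by
    rw [(stronglyGraded_iff gr).1 h σ (G.inv σ) (G.t_inv σ), G.comp_inv]
    exact gr.pi_mem_Asub _ 1

theorem HasPartialUnits.stronglyGraded (h : gr.HasPartialUnits) : StronglyGraded k G A gr := by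
  refine (stronglyGraded_iff gr).2 fun σ τ hc => le_antisymm (gr.Asub_mul_le hc) fun c hcm => ?_
  have hunit : gr.π (G.e (G.t σ)) 1 * c = c := by
    simpa only [G.t_comp σ τ hc] using gr.pi_e_one_mul_of_mem hcm
  have hle : Asub k G A gr (G.inv σ) * Asub k G A gr (G.comp σ τ) ≤ Asub k G A gr τ := by
    have := gr.Asub_mul_le (σ := G.inv σ) (τ := G.comp σ τ) (by rw [G.t_comp σ τ hc, G.s_inv])
    rwa [G.inv_comp_cancel_left hc] at this
  rw [← hunit]
  refine mul_le_mul' le_rfl hle ?_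
  rw [← mul_assoc]
  exact Submodule.mul_mem_mul (h σ) hcm

theorem HasPartialUnits.exists_sum_eq (h : gr.HasPartialUnits) (σ : G.M) :
    ∃ (n : ℕ) (u v : Fin n → A), (∀ j, u j ∈ Asub k G A gr (G.inv σ)) ∧
      (∀ j, v j ∈ Asub k G A gr σ) ∧ ∑ j, u j * v j = gr.π (G.e (G.s σ)) 1 := by
  have hσ := h (G.inv σ)
  rw [G.inv_inv, G.t_inv] at hσ
  exact Submodule.exists_fin_sum_mul_eq_of_mem_mul hσ

theorem sum_sum_pi_mul_mul_eq {n : G.M → ℕ} {u v : ∀ σ, Fin (n σ) → A}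
    (huv : ∀ σ, ∑ j, u σ j * v σ j = gr.π (G.e (G.s σ)) 1) (a : A) :
    ∑ σ, ∑ j, gr.π σ a * u σ j * v σ j = a := by
  conv_rhs => rw [← gr.sum_pi a]
  refine Finset.sum_congr rfl fun σ _ => ?_
  simp only [mul_assoc, ← Finset.mul_sum, huv, gr.mul_pi_e_one_of_mem (gr.pi_mem_Asub σ a)]

variable (gr)

theorem canMap_tmul (a b : A) : canMap k G A gr (a ⊗ₜ[k] b) = fun σ => a * gr.π σ b := rfl

/-- `A ⊗_T A` is `A ⊗ₖ A` modulo this submodule. -/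
def canRelations : Submodule k (A ⊗[k] A) :=
  Submodule.span k {z : A ⊗[k] A | ∃ (a b t : A),
    t ∈ Tset k G A gr ∧ z = (a * t) ⊗ₜ[k] b - a ⊗ₜ[k] (t * b)}

theorem canRelations_le_ker : gr.canRelations ≤ LinearMap.ker (canMap k G A gr) := by
  rw [canRelations, Submodule.span_le]
  rintro z ⟨a, b, t, ht, rfl⟩
  ext σ
  simp [canMap_tmul, gr.pi_mul_of_mem_Tset ht, mul_assoc]

theorem inC_canMap (z : A ⊗[k] A) : inC k G A gr (canMap k G A gr z) := by
  induction z using TensorProduct.induction_on with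
  | zero => intro σ; simp
  | tmul a b => intro σ; rw [canMap_tmul, mul_assoc, gr.mul_pi_e_one_of_mem (gr.pi_mem_Asub σ b)]
  | add x y hx hy => intro σ; rw [map_add, Pi.add_apply, add_mul, hx σ, hy σ]

section CanInverse

variable {gr} {n : G.M → ℕ} {u v : ∀ σ, Fin (n σ) → A}

variable (u v) in
noncomputable def canInv : (G.M → A) →ₗ[k] A ⊗[k] A :=
  ∑ σ, ∑ j, (TensorProduct.mk k A A).flip (v σ j) ∘ₗ
    LinearMap.mulRight k (u σ j) ∘ₗ LinearMap.proj σ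

theorem canInv_apply (f : G.M → A) :
    canInv u v f = ∑ σ, ∑ j, (f σ * u σ j) ⊗ₜ[k] v σ j := by
  simp [canInv]

theorem canMap_canInv (hv : ∀ σ j, v σ j ∈ Asub k G A gr σ)
    (huv : ∀ σ, ∑ j, u σ j * v σ j = gr.π (G.e (G.s σ)) 1) {f : G.M → A}
    (hf : inC k G A gr f) : canMap k G A gr (canInv u v f) = f := by
  ext τ
  have hterm : ∀ σ j, canMap k G A gr ((f σ * u σ j) ⊗ₜ[k] v σ j) τ =
      if τ = σ then f σ * (u σ j * v σ j) else 0 := fun σ j => by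
    simp only [canMap_tmul, gr.pi_of_mem_Asub (hv σ j)]
    split_ifs <;> simp [mul_assoc]
  simp only [canInv_apply, map_sum, Finset.sum_apply, hterm]
  rw [Finset.sum_eq_single τ (fun σ _ h => by simp [Ne.symm h]) (by simp)]
  simp only [if_true, ← Finset.mul_sum, huv, hf τ]

theorem sub_canInv_canMap_mem (hu : ∀ σ j, u σ j ∈ Asub k G A gr (G.inv σ))
    (huv : ∀ σ, ∑ j, u σ j * v σ j = gr.π (G.e (G.s σ)) 1) (z : A ⊗[k] A) :
    z - canInv u v (canMap k G A gr z) ∈ gr.canRelations := by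
  induction z using TensorProduct.induction_on with
  | zero => simp
  | add x y hx hy =>
    rw [map_add, map_add, add_sub_add_comm]
    exact add_mem hx hy
  | tmul a b =>
    have hsplit : a ⊗ₜ[k] b = ∑ σ, ∑ j, a ⊗ₜ[k] (gr.π σ b * u σ j * v σ j) := by
      simp only [← TensorProduct.tmul_sum, gr.sum_sum_pi_mul_mul_eq huv]
    simp only [canInv_apply, canMap_tmul]
    rw [hsplit]
    simp only [← Finset.sum_sub_distrib]
    refine Submodule.sum_mem _ fun σ _ => Submodule.sum_mem _ fun j _ => ?_
    rw [← neg_mem_iff, neg_sub, mul_assoc a]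
    exact Submodule.subset_span ⟨a, v σ j, _,
      gr.mul_mem_Tset_of_mem_inv (gr.pi_mem_Asub σ b) (hu σ j), rfl⟩

end CanInverse

variable {gr}

theorem HasPartialUnits.canBijective (h : gr.HasPartialUnits) : CanBijective k G A gr := by
  choose n u v hu hv huv using h.exists_sum_eq
  refine ⟨fun z hz => gr.canRelations_le_ker hz, fun z hz => ?_, gr.inC_canMap,
    fun f hf => ⟨canInv u v f, canMap_canInv hv huv hf⟩⟩
  have hmem := sub_canInv_canMap_mem hu huv z
  rwa [hz, map_zero, sub_zero] at hmem

theorem _root_.CanSurjective.hasPartialUnits (h : CanSurjective k G A gr) : gr.HasPartialUnits := by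
  intro σ
  let f : G.M → A := Pi.single (G.inv σ) (gr.π (G.e (G.t σ)) 1)
  have hf : inC k G A gr f := by
    intro τ
    by_cases hτ : τ = G.inv σ
    · subst hτ
      simpa [f, G.s_inv] using gr.pi_e_one_mul_pi_e_one (G.t σ)
    · simp [f, hτ]
  obtain ⟨z, hz⟩ := h f hf
  have key : ∀ w : A ⊗[k] A, gr.π (G.e (G.t σ)) (canMap k G A gr w (G.inv σ)) ∈
      Asub k G A gr σ * Asub k G A gr (G.inv σ) := by
    intro w
    induction w using TensorProduct.induction_on with
    | zero => simp
    | add x y hx hy => simpa using add_mem hx hy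
    | tmul a b =>
      rw [canMap_tmul, gr.pi_e_t_mul_of_mem_inv (gr.pi_mem_Asub _ b)]
      exact Submodule.mul_mem_mul (gr.pi_mem_Asub σ a) (gr.pi_mem_Asub _ b)
  simpa [hz, f, gr.pi_pi] using key z

variable (gr)

noncomputable def tProj : A →ₗ[k] A := ∑ x, gr.π (G.e x)

theorem tProj_apply (a : A) : gr.tProj a = ∑ x, gr.π (G.e x) a := by
  simp [tProj]

theorem tProj_mem_Tset (a : A) : gr.tProj a ∈ Tset k G A gr := fun σ hσ => by
  rw [tProj_apply, map_sum]
  exact Finset.sum_eq_zero fun x _ => gr.pi_e_mem_Tset x a σ hσ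

theorem tProj_one : gr.tProj 1 = 1 := by
  rw [tProj_apply, gr.sum_pi_e_one]

theorem tProj_mul_of_mem_Tset {t : A} (ht : t ∈ Tset k G A gr) (a : A) :
    gr.tProj (t * a) = t * gr.tProj a := by
  simp only [tProj_apply, gr.pi_mul_of_mem_Tset ht, Finset.mul_sum]

section UnitMap

variable {gr} {N : Type} [AddCommGroup N] [Module k N] {ract : A → N →ₗ[k] N}

theorem mk_ract_tmul {t : A} (ht : t ∈ Tset k G A gr) (n : N) (a : A) :
    (Submodule.Quotient.mk (ract t n ⊗ₜ[k] a) : (N ⊗[k] A) ⧸ balT k G A gr N ract) =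
      Submodule.Quotient.mk (n ⊗ₜ[k] (t * a)) :=
  (Submodule.Quotient.eq _).2 (Submodule.subset_span ⟨n, a, t, ht, rfl⟩)

theorem nuMap_eq_mk_tmul_one (n : N) :
    nuMap k G A gr N ract n = Submodule.Quotient.mk (n ⊗ₜ[k] 1) := by
  simp only [nuMap, mk_ract_tmul (gr.pi_e_mem_Tset _ 1), gr.pi_e_one_mul_pi_e_one]
  conv_rhs => rw [← gr.sum_pi_e_one, TensorProduct.tmul_sum, ← Submodule.mkQ_apply, map_sum]
  rfl

theorem nuMap_mem_CoSub (n : N) : nuMap k G A gr N ract n ∈ CoSub k G A gr N ract := by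
  rw [nuMap_eq_mk_tmul_one]
  exact Submodule.subset_span ⟨n, 1, gr.one_supp, rfl⟩

theorem exists_nuMap_eq_of_mem_CoSub {y : (N ⊗[k] A) ⧸ balT k G A gr N ract}
    (hy : y ∈ CoSub k G A gr N ract) : ∃ n, nuMap k G A gr N ract n = y := by
  let ν : N →ₗ[k] (N ⊗[k] A) ⧸ balT k G A gr N ract :=
    (balT k G A gr N ract).mkQ ∘ₗ (TensorProduct.mk k N A).flip 1
  have hle : CoSub k G A gr N ract ≤ LinearMap.range ν := by
    rw [CoSub, Submodule.span_le]
    rintro y ⟨n, t, ht, rfl⟩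
    exact ⟨ract t n, by simp [ν, mk_ract_tmul ht]⟩
  obtain ⟨n, rfl⟩ := hle hy
  exact ⟨n, nuMap_eq_mk_tmul_one n⟩

variable (hmul : ∀ t t' : A, t ∈ Tset k G A gr → t' ∈ Tset k G A gr →
    ∀ n : N, ract (t * t') n = ract t' (ract t n))
  (hadd : ∀ t t' : A, t ∈ Tset k G A gr → t' ∈ Tset k G A gr →
    ract (t + t') = ract t + ract t')
  (hsmul : ∀ (c : k) (t : A), t ∈ Tset k G A gr → ract (c • t) = c • ract t)

variable (ract) in
noncomputable def nuRetraction : N ⊗[k] A →ₗ[k] N :=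
  TensorProduct.lift (LinearMap.mk₂ k (fun n a => ract (gr.tProj a) n)
    (fun _ _ _ => map_add _ _ _) (fun _ _ _ => map_smul _ _ _)
    (fun n a b => by
      rw [map_add, hadd _ _ (gr.tProj_mem_Tset a) (gr.tProj_mem_Tset b), LinearMap.add_apply])
    (fun c n a => by
      rw [map_smul, hsmul c _ (gr.tProj_mem_Tset a), LinearMap.smul_apply]))

include hmul in
theorem balT_le_ker_nuRetraction :
    balT k G A gr N ract ≤ LinearMap.ker (nuRetraction ract hadd hsmul) := by
  rw [balT, Submodule.span_le]
  rintro z ⟨n, a, t, ht, rfl⟩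
  simp only [SetLike.mem_coe, LinearMap.mem_ker, map_sub, nuRetraction, TensorProduct.lift.tmul,
    LinearMap.mk₂_apply, gr.tProj_mul_of_mem_Tset ht, hmul t _ ht (gr.tProj_mem_Tset a), sub_self]

include hmul hadd hsmul in
theorem nuMap_injective (hone : ∀ n : N, ract 1 n = n) :
    Function.Injective (nuMap k G A gr N ract) := by
  let ε := (balT k G A gr N ract).liftQ _ (balT_le_ker_nuRetraction hmul hadd hsmul)
  have hε : ∀ n, ε (nuMap k G A gr N ract n) = n := fun n => by
    simp [ε, nuMap_eq_mk_tmul_one, nuRetraction, gr.tProj_one, hone]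
  exact Function.LeftInverse.injective hε

end UnitMap

end GradedAlg

namespace GradedMod

variable {k G A} {gr : GradedAlg k G A} (X : GradedMod k G A gr)

def Msub (σ : G.M) : Submodule k X.Mc where
  carrier := {m | X.πM σ m = m}
  add_mem' {a b} ha hb := by simp_all
  zero_mem' := map_zero _
  smul_mem' c m hm := by simp_all

theorem mem_Msub_iff {σ : G.M} {m : X.Mc} : m ∈ X.Msub σ ↔ X.πM σ m = m := Iff.rfl

theorem piM_mem_Msub (σ : G.M) (m : X.Mc) : X.πM σ m ∈ X.Msub σ := by
  rw [mem_Msub_iff, X.pi_pi, if_pos rfl]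

theorem piM_of_mem_Msub {σ : G.M} {m : X.Mc} (hm : m ∈ X.Msub σ) (τ : G.M) :
    X.πM τ m = if τ = σ then m else 0 := by
  rw [← hm, X.pi_pi, hm]

theorem act_mem_Msub_comp {σ τ : G.M} {m : X.Mc} {a : A} (hm : m ∈ X.Msub σ)
    (ha : a ∈ Asub k G A gr τ) (h : G.t τ = G.s σ) : X.act a m ∈ X.Msub (G.comp σ τ) := by
  have := X.mul_comp σ τ m a h
  rw [hm, ha] at this
  exact this.symm

theorem act_eq_zero_of_mem_Msub {σ τ : G.M} {m : X.Mc} {a : A} (hm : m ∈ X.Msub σ)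
    (ha : a ∈ Asub k G A gr τ) (h : G.t τ ≠ G.s σ) : X.act a m = 0 := by
  rw [← hm, ← ha]
  exact X.mul_ncomp σ τ m a h

theorem act_pi_e_one_of_mem_Msub {σ : G.M} {m : X.Mc} (hm : m ∈ X.Msub σ) :
    X.act (gr.π (G.e (G.s σ)) 1) m = m := by
  calc X.act (gr.π (G.e (G.s σ)) 1) m = ∑ x, X.act (gr.π (G.e x) 1) m := by
        rw [Finset.sum_eq_single (G.s σ) (fun x _ hx => ?_) (fun h => absurd (Finset.mem_univ _) h)]
        exact X.act_eq_zero_of_mem_Msub hm (gr.pi_mem_Asub _ 1) (by rwa [G.t_e])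
    _ = m := by
        rw [← LinearMap.sum_apply, ← map_sum, gr.sum_pi_e_one, X.act_one, LinearMap.id_apply]

theorem mem_Mco_of_mem_Msub_e {x : G.O} {m : X.Mc} (hm : m ∈ X.Msub (G.e x)) :
    m ∈ Mco k G A gr X := fun σ hσ => by
  rw [X.piM_of_mem_Msub hm, if_neg (hσ x)]

theorem sum_piM_e_of_mem_Mco {m : X.Mc} (hm : m ∈ Mco k G A gr X) :
    ∑ x, X.πM (G.e x) m = m := by
  rw [G.sum_e_eq_sum (fun σ => X.πM σ m) hm, X.sum_pi]

theorem act_mem_Msub_of_mem_Mco {m : X.Mc} {a : A} {τ : G.M} (hm : m ∈ Mco k G A gr X)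
    (ha : a ∈ Asub k G A gr τ) : X.act a m ∈ X.Msub τ := by
  rw [← X.sum_piM_e_of_mem_Mco hm, map_sum]
  refine Submodule.sum_mem _ fun x _ => ?_
  by_cases h : G.t τ = x
  · subst h
    simpa only [G.e_comp] using
      X.act_mem_Msub_comp (X.piM_mem_Msub _ m) ha (G.s_e _).symm
  · rw [X.act_eq_zero_of_mem_Msub (X.piM_mem_Msub _ m) ha (by rwa [G.s_e])]
    exact zero_mem _

theorem piM_act_of_mem_Mco {m : X.Mc} (hm : m ∈ Mco k G A gr X) (σ : G.M) (a : A) :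
    X.πM σ (X.act a m) = X.act (gr.π σ a) m := by
  have key : ∀ τ, X.πM σ (X.act (gr.π τ a) m) = if σ = τ then X.act (gr.π τ a) m else 0 :=
    fun τ => X.piM_of_mem_Msub (X.act_mem_Msub_of_mem_Mco hm (gr.pi_mem_Asub τ a)) σ
  conv_lhs => rw [← gr.sum_pi a, map_sum, LinearMap.sum_apply, map_sum]
  simp only [key, Finset.sum_ite_eq, Finset.mem_univ, if_true]

theorem act_mem_Mco_of_mem_inv {σ : G.M} {m : X.Mc} {u : A} (hm : m ∈ X.Msub σ)
    (hu : u ∈ Asub k G A gr (G.inv σ)) : X.act u m ∈ Mco k G A gr X :=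
  X.mem_Mco_of_mem_Msub_e (x := G.t σ) (by
    simpa only [G.comp_inv] using X.act_mem_Msub_comp hm hu (G.t_inv σ))

theorem zmap_tmul (m : Mco k G A gr X) (a : A) :
    zmap k G A gr X (m ⊗ₜ[k] a) = X.act a (m : X.Mc) := rfl

theorem balMod_le_ker_zmap : balMod k G A gr X ≤ LinearMap.ker (zmap k G A gr X) := by
  rw [balMod, Submodule.span_le]
  rintro z ⟨m, m', t, a, ht, hm', rfl⟩
  simp [zmap_tmul, hm', X.act_mul]

section CounitInverse

variable {n : G.M → ℕ} {u v : ∀ σ, Fin (n σ) → A}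
  (hu : ∀ σ j, u σ j ∈ Asub k G A gr (G.inv σ))
  (huv : ∀ σ, ∑ j, u σ j * v σ j = gr.π (G.e (G.s σ)) 1)

variable (v) in
noncomputable def counitInv : X.Mc →ₗ[k] Mco k G A gr X ⊗[k] A :=
  ∑ σ, ∑ j, (TensorProduct.mk k (Mco k G A gr X) A).flip (v σ j) ∘ₗ
    LinearMap.codRestrict (Mco k G A gr X) (X.act (u σ j) ∘ₗ X.πM σ)
      fun m => X.act_mem_Mco_of_mem_inv (X.piM_mem_Msub σ m) (hu σ j)

theorem counitInv_apply (m : X.Mc) : X.counitInv v hu m = ∑ σ, ∑ j,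
    (⟨X.act (u σ j) (X.πM σ m), X.act_mem_Mco_of_mem_inv (X.piM_mem_Msub σ m) (hu σ j)⟩ :
      Mco k G A gr X) ⊗ₜ[k] v σ j := by
  simp only [counitInv, LinearMap.sum_apply, LinearMap.comp_apply]
  rfl

include huv in
theorem zmap_counitInv (m : X.Mc) : zmap k G A gr X (X.counitInv v hu m) = m := by
  have hσ : ∀ σ, ∑ j, X.act (v σ j) (X.act (u σ j) (X.πM σ m)) = X.πM σ m := fun σ =>
    calc ∑ j, X.act (v σ j) (X.act (u σ j) (X.πM σ m))
        = X.act (∑ j, u σ j * v σ j) (X.πM σ m) := by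
          simp only [map_sum, LinearMap.sum_apply, X.act_mul, LinearMap.comp_apply]
      _ = X.πM σ m := by rw [huv, X.act_pi_e_one_of_mem_Msub (X.piM_mem_Msub σ m)]
  simp only [counitInv_apply, map_sum, zmap_tmul, hσ, X.sum_pi]

include huv in
theorem counitInv_zmap_sub_mem (z : Mco k G A gr X ⊗[k] A) :
    X.counitInv v hu (zmap k G A gr X z) - z ∈ balMod k G A gr X := by
  induction z using TensorProduct.induction_on with
  | zero => simp
  | add x y hx hy =>
    rw [map_add, map_add, add_sub_add_comm]
    exact add_mem hx hy
  | tmul m a =>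
    have hsplit : m ⊗ₜ[k] a = ∑ σ, ∑ j, m ⊗ₜ[k] (gr.π σ a * u σ j * v σ j) := by
      simp only [← TensorProduct.tmul_sum, gr.sum_sum_pi_mul_mul_eq huv]
    rw [zmap_tmul, counitInv_apply, hsplit, ← Finset.sum_sub_distrib]
    refine Submodule.sum_mem _ fun σ _ => ?_
    rw [← Finset.sum_sub_distrib]
    refine Submodule.sum_mem _ fun j _ => Submodule.subset_span ⟨m, _, _, v σ j,
      gr.mul_mem_Tset_of_mem_inv (gr.pi_mem_Asub σ a) (hu σ j), ?_, rfl⟩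
    change X.act (u σ j) (X.πM σ (X.act a m)) = X.act (gr.π σ a * u σ j) m
    rw [X.piM_act_of_mem_Mco m.2, X.act_mul]
    rfl

end CounitInverse

end GradedMod

namespace GradedAlg

variable {k G A} (gr : GradedAlg k G A)

theorem pi_e_one_mul_eq_sum (x : G.O) (a : A) :
    gr.π (G.e x) 1 * a = ∑ τ, (if G.t τ = x then gr.π τ a else 0) := by
  conv_lhs => rw [← gr.sum_pi a, Finset.mul_sum]
  refine Finset.sum_congr rfl fun τ _ => ?_
  split_ifs with h
  · subst h
    exact gr.pi_e_one_mul_of_mem (gr.pi_mem_Asub τ a)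
  · exact gr.mul_eq_zero_of_mem_Asub (gr.pi_mem_Asub _ 1) (gr.pi_mem_Asub τ a) (by rwa [G.s_e])

/-- The right ideal `1_{t ρ} A`, underlying the shifted graded module `A(ρ)`. -/
def shiftSub (ρ : G.M) : Submodule k A where
  carrier := {a | gr.π (G.e (G.t ρ)) 1 * a = a}
  add_mem' {a b} ha hb := by simp_all [mul_add]
  zero_mem' := mul_zero _
  smul_mem' c a ha := by simp_all

variable {gr}

theorem mem_shiftSub_iff {ρ : G.M} {a : A} :
    a ∈ gr.shiftSub ρ ↔ gr.π (G.e (G.t ρ)) 1 * a = a := Iff.rfl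

theorem pi_comp_mem_shiftSub {ρ σ : G.M} (h : G.t σ = G.s ρ) (a : A) :
    gr.π (G.comp ρ σ) a ∈ gr.shiftSub ρ := by
  rw [mem_shiftSub_iff]
  simpa only [G.t_comp ρ σ h] using gr.pi_e_one_mul_of_mem (gr.pi_mem_Asub (G.comp ρ σ) a)

variable (gr)

noncomputable def shiftPi (ρ σ : G.M) : gr.shiftSub ρ →ₗ[k] gr.shiftSub ρ :=
  if h : G.t σ = G.s ρ then
    (gr.π (G.comp ρ σ)).restrict fun a _ => pi_comp_mem_shiftSub h a
  else 0

theorem coe_shiftPi (ρ σ : G.M) (m : gr.shiftSub ρ) :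
    (gr.shiftPi ρ σ m : A) = if G.t σ = G.s ρ then gr.π (G.comp ρ σ) m else 0 := by
  unfold shiftPi
  split_ifs <;> rfl

noncomputable def shiftAct (ρ : G.M) : A →ₗ[k] Module.End k (gr.shiftSub ρ) where
  toFun b := (LinearMap.mulRight k b).restrict fun a ha => by
    simp only [mem_shiftSub_iff, LinearMap.mulRight_apply, ← mul_assoc] at ha ⊢
    rw [ha]
  map_add' _ _ := by ext; simp [mul_add]
  map_smul' _ _ := by ext; simp

theorem coe_shiftAct (ρ : G.M) (b : A) (m : gr.shiftSub ρ) :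
    (gr.shiftAct ρ b m : A) = m * b := rfl

noncomputable def shiftMod (ρ : G.M) : GradedMod k G A gr where
  Mc := gr.shiftSub ρ
  act := gr.shiftAct ρ
  act_one := by ext; simp [coe_shiftAct]
  act_mul _ _ := by ext; simp [coe_shiftAct, mul_assoc]
  πM := gr.shiftPi ρ
  sum_pi m := by
    ext
    simp only [Submodule.coe_sum, coe_shiftPi, G.sum_ite_t_eq_s_comp ρ (gr.π · (m : A)),
      ← pi_e_one_mul_eq_sum, mem_shiftSub_iff.1 m.2]
  pi_pi σ τ m := by
    ext
    by_cases hστ : σ = τ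
    · subst hστ
      simp only [if_true, coe_shiftPi]
      split_ifs <;> simp [gr.pi_pi]
    · simp only [hστ, if_false, coe_shiftPi, ZeroMemClass.coe_zero]
      by_cases hσ : G.t σ = G.s ρ
      · by_cases hτ : G.t τ = G.s ρ
        · have hne : G.comp ρ σ ≠ G.comp ρ τ := fun h => hστ (G.comp_left_cancel hσ hτ h)
          simp [hσ, hτ, gr.pi_pi, hne]
        · simp [hσ, hτ]
      · simp [hσ]
  mul_comp σ τ m a h := by
    ext
    simp only [coe_shiftAct, coe_shiftPi, G.t_comp σ τ h]
    split_ifs with hσ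
    · rw [← G.comp_assoc _ _ _ hσ h]
      exact (gr.mul_mem_Asub_comp (gr.pi_mem_Asub _ _) (gr.pi_mem_Asub τ a)
        (by rw [G.s_comp ρ σ hσ, h])).symm
    · simp
  mul_ncomp σ τ m a h := by
    ext
    simp only [coe_shiftAct, coe_shiftPi]
    split_ifs with hσ
    · exact gr.mul_eq_zero_of_mem_Asub (gr.pi_mem_Asub _ _) (gr.pi_mem_Asub τ a)
        (by rwa [G.s_comp ρ σ hσ])
    · simp

/-- The inclusion `A(ρ) ⊆ A`, typed on `(gr.shiftMod ρ).Mc`: the plain subtype coercion does not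
apply there because the module instances differ syntactically. -/
def shiftVal (ρ : G.M) : (gr.shiftMod ρ).Mc →ₗ[k] A := (gr.shiftSub ρ).subtype

theorem coe_mem_Asub_of_mem_Mco_shiftMod {ρ : G.M} {m : gr.shiftSub ρ}
    (hm : m ∈ Mco k G A gr (gr.shiftMod ρ)) : (m : A) ∈ Asub k G A gr ρ := by
  have hsum : ∑ x, gr.shiftPi ρ (G.e x) m = m := (gr.shiftMod ρ).sum_piM_e_of_mem_Mco hm
  apply_fun Subtype.val at hsum
  rw [mem_Asub_iff]
  simpa [coe_shiftPi, G.t_e, G.comp_e] using hsum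

variable {gr}

theorem HasPartialUnits.isEquivalencePair (h : gr.HasPartialUnits) :
    IsEquivalencePair k G A gr := by
  choose n u v hu hv huv using h.exists_sum_eq
  refine ⟨fun X => ⟨fun z hz => X.balMod_le_ker_zmap hz, fun z hz => ?_,
      fun m => ⟨X.counitInv v hu m, X.zmap_counitInv hu huv m⟩⟩,
    fun N _ _ ract hmul hone hadd hsmul => ⟨nuMap_mem_CoSub, nuMap_injective hmul hadd hsmul hone,
      fun y hy => exists_nuMap_eq_of_mem_CoSub hy⟩⟩
  simpa [hz] using X.counitInv_zmap_sub_mem hu huv z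

theorem _root_.IsEquivalencePair.hasPartialUnits (h : IsEquivalencePair k G A gr) :
    gr.HasPartialUnits := by
  intro ρ
  let X := gr.shiftMod ρ
  obtain ⟨z, hz⟩ := (h.1 X).2.2 (⟨_, gr.pi_e_one_mul_pi_e_one (G.t ρ)⟩ : gr.shiftSub ρ)
  have key : ∀ w : Mco k G A gr X ⊗[k] A,
      gr.π (G.e (G.t ρ)) (gr.shiftVal ρ (zmap k G A gr X w)) ∈
        Asub k G A gr ρ * Asub k G A gr (G.inv ρ) := by
    intro w
    induction w using TensorProduct.induction_on with
    | zero => simp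
    | add x y hx hy => simpa using add_mem hx hy
    | tmul m a =>
      have hm : gr.shiftVal ρ m ∈ Asub k G A gr ρ := coe_mem_Asub_of_mem_Mco_shiftMod gr m.2
      change gr.π _ (gr.shiftVal ρ m * a) ∈ _
      rw [gr.pi_e_t_mul_of_mem hm]
      exact Submodule.mul_mem_mul hm (gr.pi_mem_Asub _ a)
  have hz' : gr.shiftVal ρ (zmap k G A gr X z) = gr.π (G.e (G.t ρ)) 1 := by rw [hz]; rfl
  simpa [hz', gr.pi_pi] using key z

end GradedAlg

/-- for a groupoid `G` and a `G`-graded `k`-algebra `A`, the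
following are equivalent: (1) `A` is strongly graded; (2) the adjoint pair
`(−⊗_T A, (−)^{co kG})` is an equivalence between right `T`-modules and
`G`-graded right `A`-modules; (3) the canonical map
`can : A ⊗_T A → ⊕_σ A·1_{s(σ)} ⊗ u_σ`, `can(a⊗b) = ∑_σ a b_σ ⊗ u_σ`, is
bijective; (4) `can` is surjective. -/
theorem strongly_graded_tfae (gr : GradedAlg k G A) :
    (StronglyGraded k G A gr ↔ IsEquivalencePair k G A gr) ∧
    (StronglyGraded k G A gr ↔ CanBijective k G A gr) ∧
    (StronglyGraded k G A gr ↔ CanSurjective k G A gr) := by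
  have hcan : StronglyGraded k G A gr → CanBijective k G A gr := fun h =>
    h.hasPartialUnits.canBijective
  have hsurj : CanSurjective k G A gr → StronglyGraded k G A gr := fun h =>
    h.hasPartialUnits.stronglyGraded
  exact ⟨⟨fun h => h.hasPartialUnits.isEquivalencePair, fun h => h.hasPartialUnits.stronglyGraded⟩,
    ⟨hcan, fun h => hsurj h.2.2.2⟩, ⟨fun h => (hcan h).2.2.2, hsurj⟩⟩
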